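/- For all real numbers b > c > -1, it holds that ((c+1)/(b+1))² < f(b,c) < 1. -/

import Mathlib

/-!
Write `a k = log ((k + 1 + b) / (k + 1 + c))`, a positive strictly decreasing sequence, so that
the partial products are `exp (∑ k < N, u (k + 1) * a k)`. Since `u` is `±1`-valued with
`u (2n) = u n` and `u (2n + 1) = -u n`, its partial sums vanish at even lengths and are `±1` at
odd ones. Splitting off `u 1 = -1`, the remaining partial sums of `u (k + 2)` are bounded by `1`
in absolute value, so Abel's inequality bounds the rest of the sum by `a 1`. Hence every partial
product with `N ≥ 1` lies in `[exp (-a 0 - a 1), exp (a 1 - a 0)]`, and so does the limit; this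
interval sits strictly inside `(exp (-2 a 0), 1) = (((c + 1) / (b + 1))², 1)` because `a 1 < a 0`.
-/

open Filter Finset Topology

/-- The Thue–Morse sequence with values `±1`: `u n = (-1)^(s₂ n)` where `s₂ n`
is the sum of the binary digits of `n`. -/
def u (n : ℕ) : ℤ := (-1) ^ (Nat.digits 2 n).sum

lemma u_zero : u 0 = 1 := rfl

lemma u_two_mul (n : ℕ) : u (2 * n) = u n := by
  rcases n.eq_zero_or_pos with rfl | hn
  · rfl
  · rw [u, Nat.digits_def' (by norm_num) (by omega)]
    simp [u]

lemma u_two_mul_add_one (n : ℕ) : u (2 * n + 1) = -u n := by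
  rw [u, Nat.digits_def' (by norm_num) (by omega), show (2 * n + 1) / 2 = n by omega]
  simp [u, pow_add]

lemma u_one : u 1 = -1 := by simpa [u_zero] using u_two_mul_add_one 0

lemma sum_range_two_mul_u (N : ℕ) : ∑ n ∈ range (2 * N), u n = 0 := by
  induction N with
  | zero => rfl
  | succ N ih =>
    rw [mul_add_one, sum_range_succ, sum_range_succ, ih, u_two_mul_add_one, u_two_mul]
    ring

lemma abs_sum_range_u_le_one (N : ℕ) : |∑ n ∈ range N, u n| ≤ 1 := by
  obtain ⟨M, rfl | rfl⟩ := N.even_or_odd'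
  · simp [sum_range_two_mul_u]
  · rw [sum_range_succ, sum_range_two_mul_u, zero_add, u_two_mul, u, abs_neg_one_pow]

lemma abs_sum_range_u_add_two_le_one (N : ℕ) : |∑ k ∈ range N, (u (k + 2) : ℝ)| ≤ 1 := by
  have h := abs_sum_range_u_le_one (N + 2)
  rw [sum_range_succ', sum_range_succ', u_zero, u_one, add_assoc, neg_add_cancel,
    add_zero] at h
  exact_mod_cast h

lemma abs_sum_range_mul_sub_le {ε a : ℕ → ℝ} {B : ℝ} (ha : Antitone a)
    (hε : ∀ n, |∑ k ∈ range n, ε k| ≤ B) (N : ℕ) :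
    |∑ k ∈ range N, ε k * a k - (∑ k ∈ range N, ε k) * a N| ≤ B * (a 0 - a N) := by
  induction N with
  | zero => simp
  | succ N ih =>
    have hstep : ∑ k ∈ range (N + 1), ε k * a k - (∑ k ∈ range (N + 1), ε k) * a (N + 1)
        = (∑ k ∈ range N, ε k * a k - (∑ k ∈ range N, ε k) * a N)
          + (∑ k ∈ range (N + 1), ε k) * (a N - a (N + 1)) := by
      simp only [sum_range_succ]; ring
    have hdiff : 0 ≤ a N - a (N + 1) := sub_nonneg.2 (ha N.le_succ)
    calc _ ≤ B * (a 0 - a N) + |∑ k ∈ range (N + 1), ε k| * (a N - a (N + 1)) := by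
          rw [hstep]
          exact (abs_add_le _ _).trans (by rw [abs_mul, abs_of_nonneg hdiff]; gcongr)
      _ ≤ B * (a 0 - a N) + B * (a N - a (N + 1)) := by gcongr; exact hε _
      _ = B * (a 0 - a (N + 1)) := by ring

lemma abs_sum_range_mul_le_of_antitone {ε a : ℕ → ℝ} {B : ℝ} (ha : Antitone a)
    (ha_nonneg : ∀ n, 0 ≤ a n) (hε : ∀ n, |∑ k ∈ range n, ε k| ≤ B) (N : ℕ) :
    |∑ k ∈ range N, ε k * a k| ≤ B * a 0 := by
  have hlast : |(∑ k ∈ range N, ε k) * a N| ≤ B * a N := by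
    rw [abs_mul, abs_of_nonneg (ha_nonneg N)]
    exact mul_le_mul_of_nonneg_right (hε N) (ha_nonneg N)
  calc |∑ k ∈ range N, ε k * a k|
      ≤ |(∑ k ∈ range N, ε k) * a N|
        + |∑ k ∈ range N, ε k * a k - (∑ k ∈ range N, ε k) * a N| := by
        simpa only [Real.norm_eq_abs] using norm_le_norm_add_norm_sub' (E := ℝ) _ _
    _ ≤ B * a N + B * (a 0 - a N) := add_le_add hlast (abs_sum_range_mul_sub_le ha hε N)
    _ = B * a 0 := by ring

lemma abs_sum_range_u_succ_mul_add_le {a : ℕ → ℝ} (ha : Antitone a) (ha_nonneg : ∀ n, 0 ≤ a n)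
    (N : ℕ) : |∑ k ∈ range (N + 1), (u (k + 1) : ℝ) * a k + a 0| ≤ a 1 := by
  rw [sum_range_succ', zero_add, u_one, Int.cast_neg, Int.cast_one, neg_one_mul,
    neg_add_cancel_right]
  simpa using abs_sum_range_mul_le_of_antitone (ε := fun k => (u (k + 2) : ℝ))
    (fun _ _ h => ha (Nat.succ_le_succ h)) (fun n => ha_nonneg (n + 1))
    abs_sum_range_u_add_two_le_one N

lemma prod_Icc_zpow_eq_exp_sum {x : ℕ → ℝ} (e : ℕ → ℤ) {N : ℕ} (hx : ∀ n ∈ Icc 1 N, 0 < x n) :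
    ∏ n ∈ Icc 1 N, x n ^ e n =
      Real.exp (∑ k ∈ range N, (e (k + 1) : ℝ) * Real.log (x (k + 1))) := by
  rw [Real.exp_sum, ← Ico_add_one_right_eq_Icc, prod_Ico_eq_prod_range, Nat.add_sub_cancel]
  refine prod_congr rfl fun k hk => ?_
  rw [add_comm 1 k, ← Real.rpow_intCast, Real.rpow_def_of_pos (hx _ (by simp at hk ⊢; omega)),
    mul_comm]

noncomputable def logRatio (b c : ℝ) (k : ℕ) : ℝ := Real.log ((k + 1 + b) / (k + 1 + c))

section logRatio

variable {b c : ℝ}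

lemma logRatio_pos (hc : -1 < c) (hcb : c < b) (k : ℕ) : 0 < logRatio b c k := by
  have hk : (0 : ℝ) ≤ k := k.cast_nonneg
  exact Real.log_pos ((one_lt_div (by linarith)).2 (by linarith))

lemma strictAnti_logRatio (hc : -1 < c) (hcb : c < b) : StrictAnti (logRatio b c) := by
  refine strictAnti_nat_of_succ_lt fun k => ?_
  have hk : (0 : ℝ) ≤ k := k.cast_nonneg
  unfold logRatio
  push_cast
  apply Real.log_lt_log (by apply div_pos <;> linarith)
  rw [div_lt_div_iff₀ (by linarith) (by linarith)]
  nlinarith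

lemma sq_div_eq_exp_logRatio (hb : -1 < b) (hc : -1 < c) :
    ((c + 1) / (b + 1)) ^ 2 = Real.exp (-(2 * logRatio b c 0)) := by
  have hlog : Real.log ((c + 1) / (b + 1)) = -logRatio b c 0 := by
    rw [logRatio, ← Real.log_inv, inv_div]
    norm_num [add_comm]
  rw [← Real.exp_log (pow_pos (div_pos (by linarith) (by linarith)) 2), Real.log_pow, hlog]
  ring_nf

lemma prod_Icc_eq_exp_sum_logRatio (hb : -1 < b) (hc : -1 < c) (N : ℕ) :
    ∏ n ∈ Icc 1 N, (((n : ℝ) + b) / ((n : ℝ) + c)) ^ (u n) =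
      Real.exp (∑ k ∈ range N, (u (k + 1) : ℝ) * logRatio b c k) := by
  rw [prod_Icc_zpow_eq_exp_sum u fun n hn => ?_]
  · push_cast
    rfl
  · have : (1 : ℝ) ≤ n := by exact_mod_cast (mem_Icc.1 hn).1
    exact div_pos (by linarith) (by linarith)

lemma prod_Icc_succ_mem_Icc (hc : -1 < c) (hcb : c < b) (N : ℕ) :
    ∏ n ∈ Icc 1 (N + 1), (((n : ℝ) + b) / ((n : ℝ) + c)) ^ (u n) ∈
      Set.Icc (Real.exp (-logRatio b c 0 - logRatio b c 1))
        (Real.exp (logRatio b c 1 - logRatio b c 0)) := by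
  have h := abs_le.1 <| abs_sum_range_u_succ_mul_add_le (strictAnti_logRatio hc hcb).antitone
    (fun k => (logRatio_pos hc hcb k).le) N
  rw [prod_Icc_eq_exp_sum_logRatio (hc.trans hcb) hc]
  exact ⟨Real.exp_le_exp.2 (by linarith [h.1]), Real.exp_le_exp.2 (by linarith [h.2])⟩

end logRatio

theorem stmt_7_general (f : ℝ → ℝ → ℝ)
    (hf : ∀ b c : ℝ, -1 < b → -1 < c →
      Tendsto (fun N : ℕ => ∏ n ∈ Finset.Icc 1 N,
        (((n : ℝ) + b) / ((n : ℝ) + c)) ^ (u n)) atTop (𝓝 (f b c))) :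
    ∀ b c : ℝ, -1 < c → c < b →
      ((c + 1) / (b + 1)) ^ 2 < f b c ∧ f b c < 1 := by
  intro b c hc hcb
  have hb : -1 < b := hc.trans hcb
  have hmem := isClosed_Icc.mem_of_tendsto ((hf b c hb hc).comp (tendsto_add_atTop_nat 1))
    (Eventually.of_forall (prod_Icc_succ_mem_Icc hc hcb))
  have hdec : logRatio b c 1 < logRatio b c 0 := strictAnti_logRatio hc hcb zero_lt_one
  constructor
  · rw [sq_div_eq_exp_logRatio hb hc]
    exact (Real.exp_lt_exp.2 (by linarith)).trans_le hmem.1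
  · exact hmem.2.trans_lt (Real.exp_lt_one_iff.2 (by linarith))

/-- If `f b c` is, for `b, c > -1`, the (positive) limit of the partial products
`∏_{n=1}^{N} ((n+b)/(n+c))^{u_n}`, then for `b > c > -1` one has
`((c+1)/(b+1))² < f(b,c) < 1`. -/
theorem stmt_7 (f : ℝ → ℝ → ℝ)
    (hf : ∀ b c : ℝ, -1 < b → -1 < c →
      Tendsto (fun N : ℕ => ∏ n ∈ Finset.Icc 1 N,
        (((n : ℝ) + b) / ((n : ℝ) + c)) ^ (u n)) atTop (𝓝 (f b c)))
    (hfpos : ∀ b c : ℝ, -1 < b → -1 < c → 0 < f b c) :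
    ∀ b c : ℝ, -1 < c → c < b →
      ((c + 1) / (b + 1)) ^ 2 < f b c ∧ f b c < 1 :=
  stmt_7_general f hf
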